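/- arXiv:1104.2699 — 2 statements merged into one kernel-verified Lean document; each statement's English description precedes it below -/
import Mathlib

section
/- The Carlitz q-Fibonacci polynomials satisfy the alternative recurrence F_n(x,s,q) = x F_{n-1}(x,qs,q) + q s F_{n-2}(x,q²s,q) for n ≥ 2, where the second argument is scaled by powers of q. -/
def gaussBinom {R : Type*} [CommRing R] (q : R) : ℕ → ℕ → R
  | _, 0 => 1
  | 0, _ + 1 => 0
  | n + 1, k + 1 => q ^ (k + 1) * gaussBinom q n (k + 1) + gaussBinom q n k

def carlitzFib {R : Type*} [CommRing R] (x q : R) (n : ℕ) (s : R) : R :=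
  match n with
  | 0 => 0
  | n + 1 =>
    ∑ k ∈ Finset.range (n / 2 + 1),
      q ^ (k ^ 2) * gaussBinom q (n - k) k * s ^ k * x ^ (n - 2 * k)

/-!
Write `F_{n+1}(x,s,q) = ∑_k T_n(k)` with `T_n(k) = q^{k²} [n-k choose k]_q s^k x^{n-2k}`.
Since the Gaussian binomial vanishes past the top, all three sums may be taken over one common
range. The `k = 0` term of `F_{n+2}(s)` is `x` times that of `F_{n+1}(qs)`, and the q-Pascal rule
`[m+1 choose k+1]_q = q^{k+1} [m choose k+1]_q + [m choose k]_q` splits every other term as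
`T_{n+1}(k+1)(s) = x T_n(k+1)(qs) + qs T_{n-1}(k)(q²s)`.
-/

open Finset

section

variable {R : Type*} [CommRing R]

theorem gaussBinom_eq_zero_of_lt (q : R) : ∀ {n k : ℕ}, n < k → gaussBinom q n k = 0
  | 0, _ + 1, _ => rfl
  | n + 1, k + 1, h => by
      rw [gaussBinom, gaussBinom_eq_zero_of_lt q (n := n) (k := k + 1) (by omega),
        gaussBinom_eq_zero_of_lt q (n := n) (k := k) (by omega), mul_zero, add_zero]

def carlitzTerm (x q s : R) (n k : ℕ) : R :=
  q ^ (k ^ 2) * gaussBinom q (n - k) k * s ^ k * x ^ (n - 2 * k)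

theorem carlitzTerm_eq_zero_of_lt {x q s : R} {n k : ℕ} (h : n < 2 * k) :
    carlitzTerm x q s n k = 0 := by
  rw [carlitzTerm, gaussBinom_eq_zero_of_lt q (by omega), mul_zero, zero_mul, zero_mul]

theorem carlitzFib_succ_eq_sum_range {x q s : R} {n N : ℕ} (hN : n / 2 < N) :
    carlitzFib x q (n + 1) s = ∑ k ∈ range N, carlitzTerm x q s n k := by
  refine sum_subset (range_subset_range.2 (by omega)) fun k hkN hkn => ?_
  rw [mem_range] at hkN hkn
  exact carlitzTerm_eq_zero_of_lt (by omega)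

theorem carlitzTerm_succ_zero (x q s : R) (n : ℕ) :
    carlitzTerm x q s (n + 1) 0 = x * carlitzTerm x q (q * s) n 0 := by
  simp only [carlitzTerm, gaussBinom, Nat.sub_zero, mul_zero, pow_zero, pow_succ]
  ring

theorem carlitzTerm_succ_succ (x q s : R) (n k : ℕ) :
    carlitzTerm x q s (n + 2) (k + 1) =
      x * carlitzTerm x q (q * s) (n + 1) (k + 1) + q * s * carlitzTerm x q (q ^ 2 * s) n k := by
  rcases Nat.lt_or_ge n (2 * k) with hlt | hle
  · simp only [carlitzTerm_eq_zero_of_lt (show n < 2 * k by omega),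
      carlitzTerm_eq_zero_of_lt (show n + 1 < 2 * (k + 1) by omega),
      carlitzTerm_eq_zero_of_lt (show n + 2 < 2 * (k + 1) by omega), mul_zero, add_zero]
  rw [carlitzTerm, carlitzTerm, carlitzTerm, show n + 2 - (k + 1) = n - k + 1 by omega,
    show n + 1 - (k + 1) = n - k by omega, show n + 2 - 2 * (k + 1) = n - 2 * k by omega, gaussBinom,
    show (k + 1) ^ 2 = k ^ 2 + 2 * k + 1 by ring]
  rcases hle.eq_or_lt with rfl | hgt
  · rw [gaussBinom_eq_zero_of_lt q (by omega)]
    ring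
  · rw [show n - 2 * k = n + 1 - 2 * (k + 1) + 1 by omega]
    ring

end

theorem carlitzFib_scaled_rec {R : Type*} [CommRing R] (x q s : R) (n : ℕ) (hn : 2 ≤ n) :
    carlitzFib x q n s =
      x * carlitzFib x q (n - 1) (q * s) + q * s * carlitzFib x q (n - 2) (q ^ 2 * s) := by
  obtain ⟨m, rfl⟩ : ∃ m, n = m + 2 := ⟨n - 2, by omega⟩
  rcases m with _ | p
  · simp [carlitzFib, gaussBinom]
  have hF : carlitzFib x q (p + 3) s = ∑ k ∈ range (p / 2 + 2), carlitzTerm x q s (p + 2) k :=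
    carlitzFib_succ_eq_sum_range (by omega)
  have hF₁ : carlitzFib x q (p + 2) (q * s) =
      ∑ k ∈ range (p / 2 + 2), carlitzTerm x q (q * s) (p + 1) k :=
    carlitzFib_succ_eq_sum_range (by omega)
  have hF₂ : carlitzFib x q (p + 1) (q ^ 2 * s) =
      ∑ k ∈ range (p / 2 + 1), carlitzTerm x q (q ^ 2 * s) p k :=
    carlitzFib_succ_eq_sum_range (by omega)
  rw [show p + 1 + 2 - 1 = p + 2 by omega, show p + 1 + 2 - 2 = p + 1 by omega, hF, hF₁, hF₂,
    sum_range_succ' _ (p / 2 + 1), sum_range_succ' _ (p / 2 + 1)]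
  simp only [carlitzTerm_succ_succ, carlitzTerm_succ_zero, sum_add_distrib, mul_add, mul_sum]
  ring
end

section
/- Evaluating the q-Fibonacci polynomials Fib_n at x = 1, s = -1/q gives: Fib_{3n}(1,-1/q,q) = 0, Fib_{3n+1}(1,-1/q,q) = (-1)^n q^{n(3n-1)/2}, and Fib_{3n+2}(1,-1/q,q) = (-1)^n q^{n(3n+1)/2} for all n ≥ 0. -/
/-!
The defining recurrence shifts `s ↦ q s`, so it does not relate values at one fixed `s`.
Unfolding it twice and inducting (with the induction hypothesis taken at `q s`) removes the
shift and gives a four-term recurrence at fixed `s`. At `x = 1`, `s = -q⁻¹` this recurrence collapses to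
`F (m + 3) = -q ^ m * F m`, so `F (3 n + r) = (-1) ^ n q ^ (∑ i < n, (3 i + r)) F r`;
the exponents for `r = 1, 2` are the pentagonal numbers.
-/

def qFib {K : Type*} [Field K] (x q : K) : ℕ → K → K
  | 0, _ => 0
  | 1, _ => 1
  | n + 2, s => x * qFib x q (n + 1) (q * s) + q * s * qFib x q n (q * s)

open Finset

theorem sum_range_three_mul_add_one (n : ℕ) :
    ∑ i ∈ range n, (3 * i + 1) = n * (3 * n - 1) / 2 := by
  induction n with
  | zero => rfl
  | succ n ih =>
    have h : (n + 1) * (3 * (n + 1) - 1) = n * (3 * n - 1) + 2 * (3 * n + 1) := by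
      rcases n with _ | n
      · rfl
      · rw [show 3 * (n + 1 + 1) - 1 = 3 * n + 5 by omega,
          show 3 * (n + 1) - 1 = 3 * n + 2 by omega]
        ring
    rw [sum_range_succ, ih, h]
    omega

theorem sum_range_three_mul_add_two (n : ℕ) :
    ∑ i ∈ range n, (3 * i + 2) = n * (3 * n + 1) / 2 := by
  induction n with
  | zero => rfl
  | succ n ih =>
    rw [sum_range_succ, ih,
      show (n + 1) * (3 * (n + 1) + 1) = n * (3 * n + 1) + 2 * (3 * n + 2) by ring]
    omega

section

variable {K : Type*} [Field K]

@[simp]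
theorem qFib_zero (x q s : K) : qFib x q 0 s = 0 := rfl

@[simp]
theorem qFib_one (x q s : K) : qFib x q 1 s = 1 := rfl

@[simp]
theorem qFib_two (x q s : K) : qFib x q 2 s = x := by
  simp [qFib]

theorem qFib_add_two (x q : K) (n : ℕ) (s : K) :
    qFib x q (n + 2) s = x * qFib x q (n + 1) (q * s) + q * s * qFib x q n (q * s) := rfl

theorem qFib_add_four (x q : K) :
    ∀ (m : ℕ) (s : K), qFib x q (m + 4) s =
      x * qFib x q (m + 3) s + q ^ (m + 2) * s * x * qFib x q (m + 1) s
        + q ^ (m + 2) * s ^ 2 * qFib x q m s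
  | 0, s => by simp [qFib]; ring
  | 1, s => by simp [qFib]; ring
  | m + 2, s => by
    linear_combination
      x * qFib_add_four x q (m + 1) (q * s) + q * s * qFib_add_four x q m (q * s)
        + qFib_add_two x q (m + 4) s - x * qFib_add_two x q (m + 3) s
        - q ^ (m + 4) * s * x * qFib_add_two x q (m + 1) s
        - q ^ (m + 4) * s ^ 2 * qFib_add_two x q m s

theorem qFib_one_neg_inv_add_four {q : K} (hq : q ≠ 0) (m : ℕ) :
    qFib 1 q (m + 4) (-q⁻¹) =
      qFib 1 q (m + 3) (-q⁻¹) - q ^ (m + 1) * qFib 1 q (m + 1) (-q⁻¹)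
        + q ^ m * qFib 1 q m (-q⁻¹) := by
  rw [qFib_add_four]
  field_simp
  ring

theorem qFib_one_neg_inv_add_three {q : K} (hq : q ≠ 0) (m : ℕ) :
    qFib 1 q (m + 3) (-q⁻¹) = -q ^ m * qFib 1 q m (-q⁻¹) := by
  induction m with
  | zero => simp [qFib, hq]
  | succ m ih => linear_combination qFib_one_neg_inv_add_four hq m + ih

theorem qFib_one_neg_inv_three_mul_add {q : K} (hq : q ≠ 0) (r n : ℕ) :
    qFib 1 q (3 * n + r) (-q⁻¹) =
      (-1) ^ n * q ^ (∑ i ∈ range n, (3 * i + r)) * qFib 1 q r (-q⁻¹) := by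
  induction n with
  | zero => simp
  | succ n ih =>
    rw [show 3 * (n + 1) + r = 3 * n + r + 3 by ring, qFib_one_neg_inv_add_three hq, ih,
      sum_range_succ, pow_add]
    ring

end

theorem qFib_special_values {K : Type*} [Field K] (q : K) (hq : q ≠ 0) (n : ℕ) :
    qFib 1 q (3 * n) (-q⁻¹) = 0 ∧
    qFib 1 q (3 * n + 1) (-q⁻¹) = (-1) ^ n * q ^ (n * (3 * n - 1) / 2) ∧
    qFib 1 q (3 * n + 2) (-q⁻¹) = (-1) ^ n * q ^ (n * (3 * n + 1) / 2) := by
  refine ⟨?_, ?_, ?_⟩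
  · simpa using qFib_one_neg_inv_three_mul_add hq 0 n
  · rw [qFib_one_neg_inv_three_mul_add hq, sum_range_three_mul_add_one, qFib_one, mul_one]
  · rw [qFib_one_neg_inv_three_mul_add hq, sum_range_three_mul_add_two, qFib_two, mul_one]
end
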